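/- arXiv:2003.09434 — 9 statements merged into one kernel-verified Lean document; each statement's English description precedes it below -/
import Mathlib

section
/- Assume that g, g̃ and η⊗η are linearly independent bilinear forms on V, let n be a positive integer, and let ρ be a symmetric bilinear form with ρ(x, ξ) = 2n·η(x) for all x. Then ρ satisfies the identity (-g̃ + η⊗η) + ρ + λ·g + μ·g̃ + ν·η⊗η = 0 for real constants (λ, μ, ν) if and only if there exist real constants (a, b, c) with ρ = a·g + b·g̃ + c·η⊗η and a + λ = 0, b + μ - 1 = 0, c + ν + 1 = 0; moreover, in that case λ + μ + ν = -2n and a + b + c = 2n. -/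
/-- Assume `g`, `g̃`, `η⊗η` are linearly independent bilinear forms, `n` a positive
integer, `ρ` symmetric with `ρ(x, ξ) = 2n·η(x)`. Then `ρ` satisfies
`(-g̃ + η⊗η) + ρ + λ·g + μ·g̃ + ν·η⊗η = 0` for constants `(λ, μ, ν)` iff there exist constants
`(a, b, c)` with `ρ = a·g + b·g̃ + c·η⊗η` and `a + λ = 0`, `b + μ - 1 = 0`, `c + ν + 1 = 0`;
moreover in that case `λ + μ + ν = -2n` and `a + b + c = 2n`. -/
theorem stmt_3 {V : Type*} [AddCommGroup V] [Module ℝ V]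
    (φ : V →ₗ[ℝ] V) (ξ : V) (η : V →ₗ[ℝ] ℝ) (g : LinearMap.BilinForm ℝ V)
    (hg_symm : ∀ x y : V, g x y = g y x)
    (hφξ : φ ξ = 0)
    (hφφ : ∀ x : V, φ (φ x) = -x + η x • ξ)
    (hηφ : ∀ x : V, η (φ x) = 0)
    (hηξ : η ξ = 1)
    (hgφφ : ∀ x y : V, g (φ x) (φ y) = -g x y + η x * η y)
    (hindep : ∀ a b c : ℝ,
      (∀ x y : V, a * g x y + b * (g x (φ y) + η x * η y) + c * (η x * η y) = 0) →
      a = 0 ∧ b = 0 ∧ c = 0)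
    (n : ℕ) (hn : 0 < n)
    (ρ : LinearMap.BilinForm ℝ V)
    (hρ_symm : ∀ x y : V, ρ x y = ρ y x)
    (hρξ : ∀ x : V, ρ x ξ = 2 * n * η x)
    (lam mu nu : ℝ) :
    ((∀ x y : V,
        (-(g x (φ y) + η x * η y) + η x * η y) + ρ x y + lam * g x y
          + mu * (g x (φ y) + η x * η y) + nu * (η x * η y) = 0) ↔
      (∃ a b c : ℝ,
        (∀ x y : V, ρ x y = a * g x y + b * (g x (φ y) + η x * η y) + c * (η x * η y)) ∧
        a + lam = 0 ∧ b + mu - 1 = 0 ∧ c + nu + 1 = 0)) ∧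
    ((∀ x y : V,
        (-(g x (φ y) + η x * η y) + η x * η y) + ρ x y + lam * g x y
          + mu * (g x (φ y) + η x * η y) + nu * (η x * η y) = 0) →
      lam + mu + nu = -(2 * n) ∧
      ∀ a b c : ℝ,
        (∀ x y : V, ρ x y = a * g x y + b * (g x (φ y) + η x * η y) + c * (η x * η y)) →
        a + b + c = 2 * n) := by

  have hgxξ : ∀ x : V, g x ξ = η x := by
    intro x
    have h := hgφφ x ξ
    rw [hφξ, hηξ] at h
    simp at h
    linarith
  constructor
  · constructor
    · intro h
      refine ⟨-lam, 1 - mu, -1 - nu, fun x y => ?_, by ring, by ring, by ring⟩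
      have := h x y
      linarith
    · rintro ⟨a, b, c, hρ, ha, hb, hc⟩
      intro x y
      have := hρ x y
      have ha' : a = -lam := by linarith
      have hb' : b = 1 - mu := by linarith
      have hc' : c = -1 - nu := by linarith
      subst ha' hb' hc'
      linarith
  · intro h
    constructor
    · have hξ := h ξ ξ
      rw [hφξ] at hξ
      simp [hηξ, hρξ, hgxξ] at hξ
      linarith
    · intro a b c hρ
      have hξ := hρ ξ ξ
      rw [hφξ] at hξ
      simp [hηξ, hρξ, hgxξ] at hξ
      linarith
end

section
/- For all x, y, z ∈ V: T(x, φ y, φ z) = 0, T(ξ, y, z) = 0, and T(x, ξ, ξ) = 0. (Hence every Sasaki-like manifold admitting a Ricci-like soliton with potential ξ is Ricci η-parallel and Ricci parallel along ξ.) -/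
/-- For the tensor
`T(x,y,z) = (1-μ)·(g(φx,φy)η(z) + g(φx,φz)η(y)) + (μ+ν)·(g(x,φy)η(z) + g(x,φz)η(y))`
(which equals `(∇_x ρ)(y,z)` on a Sasaki-like manifold admitting a Ricci-like soliton with
potential `ξ`), one has `T(x, φ y, φ z) = 0`, `T(ξ, y, z) = 0`, and `T(x, ξ, ξ) = 0`
for all `x, y, z`; hence the manifold is Ricci η-parallel and Ricci parallel along `ξ`. -/
theorem stmt_7 {V : Type*} [AddCommGroup V] [Module ℝ V]
    (φ : V →ₗ[ℝ] V) (ξ : V) (η : V →ₗ[ℝ] ℝ) (g : LinearMap.BilinForm ℝ V)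
    (hg_symm : ∀ x y : V, g x y = g y x)
    (hφξ : φ ξ = 0)
    (hφφ : ∀ x : V, φ (φ x) = -x + η x • ξ)
    (hηφ : ∀ x : V, η (φ x) = 0)
    (hηξ : η ξ = 1)
    (hgφφ : ∀ x y : V, g (φ x) (φ y) = -g x y + η x * η y)
    (mu nu : ℝ)
    (T : V → V → V → ℝ)
    (hT : ∀ x y z : V, T x y z =
      (1 - mu) * (g (φ x) (φ y) * η z + g (φ x) (φ z) * η y)
        + (mu + nu) * (g x (φ y) * η z + g x (φ z) * η y)) :
    (∀ x y z : V, T x (φ y) (φ z) = 0) ∧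
    (∀ y z : V, T ξ y z = 0) ∧
    (∀ x : V, T x ξ ξ = 0) := by
  have hgξφ : ∀ y : V, g ξ (φ y) = 0 := by
    intro y
    have h := hgφφ ξ (φ y)
    rw [hφξ, hηξ, hηφ] at h
    simp at h
    linarith [h]
  refine ⟨fun x y z => ?_, fun y z => ?_, fun x => ?_⟩
  · rw [hT]; simp [hηφ]
  · rw [hT]; simp [hφξ, hgξφ]
  · rw [hT]; simp [hφξ]
end

section
/- Suppose there exists x₀ ∈ V with g(φ x₀, φ x₀) ≠ 0. Then T(x, y, z) = 0 for all x, y, z ∈ V if and only if μ = 1 and ν = -1. (Hence a Sasaki-like manifold admitting a Ricci-like soliton with potential ξ and constants (λ, μ, ν) satisfying λ + μ + ν = -2n is locally Ricci symmetric if and only if (λ, μ, ν) = (-2n, 1, -1), i.e. it is an Einstein manifold.) -/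
/-- Suppose there exists `x₀` with `g(φ x₀, φ x₀) ≠ 0`. Then the tensor
`T(x,y,z) = (1-μ)·(g(φx,φy)η(z) + g(φx,φz)η(y)) + (μ+ν)·(g(x,φy)η(z) + g(x,φz)η(y))`
vanishes identically if and only if `μ = 1` and `ν = -1`. Hence a Sasaki-like manifold
admitting a Ricci-like soliton with potential `ξ` and constants `(λ, μ, ν)` with
`λ + μ + ν = -2n` is locally Ricci symmetric iff `(λ, μ, ν) = (-2n, 1, -1)`,
i.e. it is Einstein. -/
theorem stmt_8 {V : Type*} [AddCommGroup V] [Module ℝ V]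
    (φ : V →ₗ[ℝ] V) (ξ : V) (η : V →ₗ[ℝ] ℝ) (g : LinearMap.BilinForm ℝ V)
    (hg_symm : ∀ x y : V, g x y = g y x)
    (hφξ : φ ξ = 0)
    (hφφ : ∀ x : V, φ (φ x) = -x + η x • ξ)
    (hηφ : ∀ x : V, η (φ x) = 0)
    (hηξ : η ξ = 1)
    (hgφφ : ∀ x y : V, g (φ x) (φ y) = -g x y + η x * η y)
    (x₀ : V) (hx₀ : g (φ x₀) (φ x₀) ≠ 0)
    (mu nu : ℝ)
    (T : V → V → V → ℝ)
    (hT : ∀ x y z : V, T x y z =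
      (1 - mu) * (g (φ x) (φ y) * η z + g (φ x) (φ z) * η y)
        + (mu + nu) * (g x (φ y) * η z + g x (φ z) * η y)) :
    (∀ x y z : V, T x y z = 0) ↔ (mu = 1 ∧ nu = -1) := by
  constructor
  · intro h
    set a := g (φ x₀) (φ x₀) with ha
    set b := g x₀ (φ x₀) with hb
    have e1 := (hT x₀ x₀ ξ).symm.trans (h x₀ x₀ ξ)
    simp only [hφξ, hηξ, hηφ, map_zero, LinearMap.zero_apply, mul_one, mul_zero,
      zero_mul, add_zero] at e1
    have e2 := (hT (φ x₀) x₀ ξ).symm.trans (h (φ x₀) x₀ ξ)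
    simp only [hφξ, hηξ, hηφ, map_zero, LinearMap.zero_apply, mul_one, mul_zero,
      zero_mul, add_zero] at e2
    have key : g (φ (φ x₀)) (φ x₀) = -b := by
      rw [hgφφ (φ x₀) x₀, hηφ, hg_symm]; ring
    rw [key] at e2
    have e1' : (1 - mu) * a + (mu + nu) * b = 0 := by rw [ha, hb]; linarith
    have e2' : (1 - mu) * (-b) + (mu + nu) * a = 0 := by rw [ha, hb]; linarith
    have h3 : ((1 - mu) * a + (mu + nu) * b) * a = 0 := by rw [e1']; ring
    have h4 : ((1 - mu) * (-b) + (mu + nu) * a) * b = 0 := by rw [e2']; ring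
    have h5 : (1 - mu) * (a ^ 2 + b ^ 2) = 0 := by linear_combination h3 - h4
    have hab : 0 < a ^ 2 + b ^ 2 := by positivity
    have hmu : mu = 1 := by
      rcases mul_eq_zero.mp h5 with h' | h'
      · linarith
      · linarith
    refine ⟨hmu, ?_⟩
    rw [hmu] at e2'
    have : (1 + nu) * a = 0 := by linarith
    rcases mul_eq_zero.mp this with h' | h'
    · linarith
    · exact absurd h' hx₀
  · rintro ⟨h1, h2⟩ x y z
    rw [hT, h1, h2]; ring
end

section
/- Let n be a positive integer, k, λ, μ, ν real numbers, D : V → ℝ a linear form, and ρ a symmetric bilinear form on V with ρ(x, ξ) = 2n·η(x) for all x. If D(x)·η(y) + D(y)·η(x) = -2·(ρ(x, y) + λ·g(x, y) - (k-μ)·g(x, φ y) + (μ+ν)·η(x)·η(y)) for all x, y ∈ V, then D(x) = -(λ+μ+ν+2n)·η(x) for all x, and ρ = -λ·g + (k-μ)·g̃ + (λ+μ+2n-k)·η⊗η. -/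
/-- Let `n` be a positive integer, `k, λ, μ, ν` reals, `D` a linear form, and
`ρ` a symmetric bilinear form with `ρ(x, ξ) = 2n·η(x)`. If
`D(x)η(y) + D(y)η(x) = -2(ρ(x,y) + λg(x,y) - (k-μ)g(x,φy) + (μ+ν)η(x)η(y))` for all `x, y`,
then `D(x) = -(λ+μ+ν+2n)·η(x)` for all `x`, and
`ρ = -λ·g + (k-μ)·g̃ + (λ+μ+2n-k)·η⊗η`. -/
theorem stmt_9 {V : Type*} [AddCommGroup V] [Module ℝ V]
    (φ : V →ₗ[ℝ] V) (ξ : V) (η : V →ₗ[ℝ] ℝ) (g : LinearMap.BilinForm ℝ V)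
    (hg_symm : ∀ x y : V, g x y = g y x)
    (hφξ : φ ξ = 0)
    (hφφ : ∀ x : V, φ (φ x) = -x + η x • ξ)
    (hηφ : ∀ x : V, η (φ x) = 0)
    (hηξ : η ξ = 1)
    (hgφφ : ∀ x y : V, g (φ x) (φ y) = -g x y + η x * η y)
    (n : ℕ) (hn : 0 < n)
    (k lam mu nu : ℝ)
    (D : V →ₗ[ℝ] ℝ)
    (ρ : LinearMap.BilinForm ℝ V)
    (hρ_symm : ∀ x y : V, ρ x y = ρ y x)
    (hρξ : ∀ x : V, ρ x ξ = 2 * n * η x)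
    (hsol : ∀ x y : V, D x * η y + D y * η x =
      -2 * (ρ x y + lam * g x y - (k - mu) * g x (φ y) + (mu + nu) * (η x * η y))) :
    (∀ x : V, D x = -(lam + mu + nu + 2 * n) * η x) ∧
    (∀ x y : V, ρ x y = -lam * g x y + (k - mu) * (g x (φ y) + η x * η y)
      + (lam + mu + 2 * n - k) * (η x * η y)) := by

  have hgxξ : ∀ x : V, g x ξ = η x := by
    intro x
    have h := hgφφ x ξ
    rw [hφξ] at h
    simp [hηξ] at h
    linarith
  have hDξ : D ξ = -(lam + mu + nu + 2 * n) := by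
    have h := hsol ξ ξ
    rw [hρξ, hηξ, hgxξ, hφξ] at h
    simp [hηξ] at h
    linarith
  have hD : ∀ x : V, D x = -(lam + mu + nu + 2 * n) * η x := by
    intro x
    have h := hsol x ξ
    rw [hρξ, hηξ, hgxξ, hφξ, hDξ] at h
    simp at h
    linarith
  refine ⟨hD, fun x y => ?_⟩
  have h := hsol x y
  rw [hD x, hD y] at h
  nlinarith [h]
end

section
/- Let n be a positive integer, λ a real constant, ρ := -λ·g + (λ+2n)·η⊗η, and suppose there exists x₀ ∈ V with g(φ x₀, φ x₀) ≠ 0. If α, β : V → ℝ are linear forms such that T_k(x, y, z) = (α(x) + β(x))·ρ(y, z) + α(y)·ρ(x, z) + α(z)·ρ(x, y) for all x, y, z ∈ V, then λ = -2n and α = 0. (Hence a Sasaki-like manifold admitting a Ricci-like soliton with vertical potential is almost pseudo Ricci symmetric only if it is Einstein.) -/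
/-- Let `n` be a positive integer, `λ` real, `ρ := -λ·g + (λ+2n)·η⊗η`, and
suppose `g(φ x₀, φ x₀) ≠ 0` for some `x₀`. If `α, β` are linear forms such that
`T_k(x,y,z) = (α(x)+β(x))ρ(y,z) + α(y)ρ(x,z) + α(z)ρ(x,y)` for all `x, y, z`, where
`T_k(x,y,z) := -(λ+2n)·(g(x,φy)η(z) + g(x,φz)η(y))`, then `λ = -2n` and `α = 0`.
Hence a Sasaki-like manifold admitting a Ricci-like soliton with vertical potential is
almost pseudo Ricci symmetric only if it is Einstein. -/
theorem stmt_13 {V : Type*} [AddCommGroup V] [Module ℝ V]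
    (φ : V →ₗ[ℝ] V) (ξ : V) (η : V →ₗ[ℝ] ℝ) (g : LinearMap.BilinForm ℝ V)
    (hg_symm : ∀ x y : V, g x y = g y x)
    (hφξ : φ ξ = 0)
    (hφφ : ∀ x : V, φ (φ x) = -x + η x • ξ)
    (hηφ : ∀ x : V, η (φ x) = 0)
    (hηξ : η ξ = 1)
    (hgφφ : ∀ x y : V, g (φ x) (φ y) = -g x y + η x * η y)
    (n : ℕ) (hn : 0 < n)
    (lam : ℝ)
    (ρ : LinearMap.BilinForm ℝ V)
    (hρ : ∀ x y : V, ρ x y = -lam * g x y + (lam + 2 * n) * (η x * η y))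
    (x₀ : V) (hx₀ : g (φ x₀) (φ x₀) ≠ 0)
    (α β : V →ₗ[ℝ] ℝ)
    (h : ∀ x y z : V,
      -(lam + 2 * n) * (g x (φ y) * η z + g x (φ z) * η y) =
        (α x + β x) * ρ y z + α y * ρ x z + α z * ρ x y) :
    lam = -(2 * n) ∧ α = 0 := by
  have hnR : (0:ℝ) < (n:ℝ) := by exact_mod_cast hn
  have hn' : (2 * (n:ℝ)) ≠ 0 := by positivity
  -- g x ξ = η x
  have hgξ : ∀ x : V, g x ξ = η x := by
    intro x
    have hx := hgφφ x ξ
    rw [hφξ, hηξ] at hx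
    simp at hx
    linarith
  -- g ξ (φ y) = 0
  have hgξφ : ∀ y : V, g ξ (φ y) = 0 := by
    intro y
    rw [hg_symm, hgξ, hηφ]
  -- ρ values
  have hρxξ : ∀ x : V, ρ x ξ = 2 * n * η x := by
    intro x; rw [hρ, hgξ, hηξ]; ring
  have hρξx : ∀ x : V, ρ ξ x = 2 * n * η x := by
    intro x; rw [hρ, hg_symm, hgξ, hηξ]; ring
  have hρξξ : ρ ξ ξ = 2 * n := by rw [hρxξ, hηξ]; ring
  -- E1 : α x + β x = -2 α(ξ) η x
  have hE1 : ∀ x : V, α x + β x = -2 * α ξ * η x := by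
    intro x
    have hx := h x ξ ξ
    rw [hρξξ, hρxξ, hφξ, hηξ] at hx
    simp at hx
    have h2 : (2 * (n:ℝ)) * (α x + β x) = (2 * (n:ℝ)) * (-2 * α ξ * η x) := by
      linear_combination -hx
    exact mul_left_cancel₀ hn' h2
  -- E2 : α y = α(ξ) η y
  have hE2 : ∀ y : V, α y = α ξ * η y := by
    intro y
    have hx := h ξ y ξ
    rw [hρξξ, hρxξ, hρξx, hφξ, hηξ, hgξφ, hE1 ξ, hηξ] at hx
    simp at hx
    have h2 : (2 * (n:ℝ)) * (α y) = (2 * (n:ℝ)) * (α ξ * η y) := by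
      linear_combination -hx
    exact mul_left_cancel₀ hn' h2
  -- E3 : -(lam+2n) g x (φ y) = α(ξ) lam (-g x y + η x η y)
  have hE3 : ∀ x y : V, -(lam + 2 * n) * g x (φ y) =
      α ξ * lam * (-g x y + η x * η y) := by
    intro x y
    have hx := h x y ξ
    rw [hρxξ x, hρxξ y, hρ x y, hφξ, hηξ, hE1 x, hE2 y] at hx
    simp at hx
    linear_combination hx
  -- evaluate at x₀
  have hG : g (φ x₀) (φ x₀) = -g x₀ x₀ + η x₀ * η x₀ := hgφφ x₀ x₀
  have hφφg : g x₀ (φ (φ x₀)) = g (φ x₀) (φ x₀) := by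
    rw [hφφ, hG]
    simp [hgξ]
  have C2 := hE3 x₀ x₀
  have C1 := hE3 x₀ (φ x₀)
  rw [hφφg, hηφ, hG] at C1
  set μ := lam + 2 * (n:ℝ) with hμdef
  set a := α ξ * lam with hadef
  set G := g (φ x₀) (φ x₀) with hGdef
  set b := g x₀ (φ x₀) with hbdef
  -- C1 : -μ * G = a * (-b + η x₀ * 0), C2 : -μ * b = a * (-g x₀ x₀ + η x₀ * η x₀) = a * G
  have C2' : μ * b = -(a * G) := by linear_combination -C2 + a * hG
  have C1' : μ * G = a * b := by linear_combination -C1 + μ * hG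
  have hsum : (μ ^ 2 + a ^ 2) * G = 0 := by
    linear_combination μ * C1' + a * C2'
  have hμa : μ ^ 2 + a ^ 2 = 0 := by
    rcases mul_eq_zero.mp hsum with h' | h'
    · exact h'
    · exact absurd h' hx₀
  have hμ : μ = 0 := by nlinarith [sq_nonneg μ, sq_nonneg a]
  have ha : a = 0 := by nlinarith [sq_nonneg μ, sq_nonneg a]
  have hlam : lam = -(2 * n) := by rw [hμdef] at hμ; linarith
  have hlamne : lam ≠ 0 := by rw [hlam]; intro hc; linarith
  have hαξ : α ξ = 0 := by
    rcases mul_eq_zero.mp ha with h' | h'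
    · exact h'
    · exact absurd h' hlamne
  refine ⟨hlam, ?_⟩
  ext y
  rw [hE2 y, hαξ]
  simp
end

section
/- Let n be a positive integer, λ a real constant, ρ := -λ·g + (λ+2n)·η⊗η, and suppose there exists x₀ ∈ V with g(φ x₀, φ x₀) ≠ 0. If α : V → ℝ is a linear form such that T_k(x, y, z) = 2α(x)·ρ(y, z) + α(y)·ρ(x, z) + α(z)·ρ(x, y) for all x, y, z ∈ V, then λ = -2n and α = 0. (Hence a Sasaki-like manifold admitting a Ricci-like soliton with vertical potential is special weakly Ricci symmetric only if it is Einstein.) -/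
/-- Let `n` be a positive integer, `λ` real, `ρ := -λ·g + (λ+2n)·η⊗η`, and
suppose `g(φ x₀, φ x₀) ≠ 0` for some `x₀`. If `α` is a linear form such that
`T_k(x,y,z) = 2α(x)ρ(y,z) + α(y)ρ(x,z) + α(z)ρ(x,y)` for all `x, y, z`, where
`T_k(x,y,z) := -(λ+2n)·(g(x,φy)η(z) + g(x,φz)η(y))`, then `λ = -2n` and `α = 0`.
Hence a Sasaki-like manifold admitting a Ricci-like soliton with vertical potential is
special weakly Ricci symmetric only if it is Einstein. -/
theorem stmt_14 {V : Type*} [AddCommGroup V] [Module ℝ V]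
    (φ : V →ₗ[ℝ] V) (ξ : V) (η : V →ₗ[ℝ] ℝ) (g : LinearMap.BilinForm ℝ V)
    (hg_symm : ∀ x y : V, g x y = g y x)
    (hφξ : φ ξ = 0)
    (hφφ : ∀ x : V, φ (φ x) = -x + η x • ξ)
    (hηφ : ∀ x : V, η (φ x) = 0)
    (hηξ : η ξ = 1)
    (hgφφ : ∀ x y : V, g (φ x) (φ y) = -g x y + η x * η y)
    (n : ℕ) (hn : 0 < n)
    (lam : ℝ)
    (ρ : LinearMap.BilinForm ℝ V)
    (hρ : ∀ x y : V, ρ x y = -lam * g x y + (lam + 2 * n) * (η x * η y))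
    (x₀ : V) (hx₀ : g (φ x₀) (φ x₀) ≠ 0)
    (α : V →ₗ[ℝ] ℝ)
    (h : ∀ x y z : V,
      -(lam + 2 * n) * (g x (φ y) * η z + g x (φ z) * η y) =
        2 * α x * ρ y z + α y * ρ x z + α z * ρ x y) :
    lam = -(2 * n) ∧ α = 0 := by
  have hn' : (0:ℝ) < n := by exact_mod_cast hn
  have hgξ : ∀ y : V, g ξ y = η y := by
    intro y
    have := hgφφ ξ y
    rw [hφξ, hηξ] at this
    simp at this
    linarith
  have hρξξ : ρ ξ ξ = 2 * n := by
    rw [hρ, hgξ, hηξ]; ring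
  have hαξ : α ξ = 0 := by
    have := h ξ ξ ξ
    rw [hφξ, hρξξ] at this
    simp at this
    have hρxξ : ρ ξ ξ = 2 * n := hρξξ
    -- this : 0 = 2 * α ξ * (2*n) + α ξ * ρ ξ ξ + α ξ * ρ ξ ξ  (after simp; inspect)
    nlinarith [this, hρξξ]
  have hα : ∀ x : V, α x = 0 := by
    intro x
    have := h x ξ ξ
    rw [hφξ, hρξξ, hαξ] at this
    simp at this
    rcases this with h1 | h1
    · linarith
    · exfalso; linarith
  have hlam : lam + 2 * n = 0 := by
    have := h (φ x₀) x₀ ξ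
    rw [hφξ, hηξ, hα, hα, hα] at this
    simp at this
    rcases this with h1 | h1
    · linarith
    · exact absurd h1 hx₀
  refine ⟨by linarith, ?_⟩
  ext x; simpa using hα x
end

section
/- Let n be a positive integer and λ a real constant; set ρ := -λ·g + (λ+2n)·η⊗η and define Q : V → V by Q x := -λ·x + (λ+2n)·η(x)·ξ (so that g(Q x, y) = ρ(x, y) for all x, y). Then it is impossible that ρ(Q y, z) + ρ(y, Q z) = 0 for all y, z ∈ V. (Hence a Sasaki-like manifold with the curvature property Q·R = 0 does not admit a Ricci-like soliton with vertical potential.) -/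
/-- Let `n` be a positive integer, `λ` real, `ρ := -λ·g + (λ+2n)·η⊗η`, and let
`Q x := -λ·x + (λ+2n)·η(x)·ξ` (so that `g(Q x, y) = ρ(x, y)`). Then it is impossible that
`ρ(Q y, z) + ρ(y, Q z) = 0` for all `y, z`. Hence a Sasaki-like manifold with the curvature
property `Q·R = 0` does not admit a Ricci-like soliton with vertical potential. -/
theorem stmt_15 {V : Type*} [AddCommGroup V] [Module ℝ V]
    (φ : V →ₗ[ℝ] V) (ξ : V) (η : V →ₗ[ℝ] ℝ) (g : LinearMap.BilinForm ℝ V)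
    (hg_symm : ∀ x y : V, g x y = g y x)
    (hφξ : φ ξ = 0)
    (hφφ : ∀ x : V, φ (φ x) = -x + η x • ξ)
    (hηφ : ∀ x : V, η (φ x) = 0)
    (hηξ : η ξ = 1)
    (hgφφ : ∀ x y : V, g (φ x) (φ y) = -g x y + η x * η y)
    (n : ℕ) (hn : 0 < n)
    (lam : ℝ)
    (ρ : LinearMap.BilinForm ℝ V)
    (hρ : ∀ x y : V, ρ x y = -lam * g x y + (lam + 2 * n) * (η x * η y))
    (Q : V →ₗ[ℝ] V)
    (hQ : ∀ x : V, Q x = -lam • x + ((lam + 2 * n) * η x) • ξ) :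
    (∀ x y : V, g (Q x) y = ρ x y) ∧
    ¬ (∀ y z : V, ρ (Q y) z + ρ y (Q z) = 0) := by
  have hgξ : ∀ y : V, g ξ y = η y := by
    intro y
    have h := hgφφ ξ y
    rw [hφξ, hηξ] at h
    simp at h
    linarith
  have hQξ : Q ξ = (2 * n : ℝ) • ξ := by
    rw [hQ, hηξ]
    module
  have hρξξ : ρ ξ ξ = 2 * n := by
    rw [hρ, hηξ]
    have := hgξ ξ
    rw [hηξ] at this
    rw [this]; ring
  constructor
  · intro x y
    rw [hQ, hρ]
    simp [hgξ y]
    ring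
  · intro h
    have h1 := h ξ ξ
    rw [hQξ] at h1
    simp only [map_smul, LinearMap.smul_apply, smul_eq_mul] at h1
    rw [hρξξ] at h1
    have hn' : (0:ℝ) < n := by exact_mod_cast hn
    nlinarith
end

section
/- Suppose there exists x₀ ∈ V with g(φ x₀, φ x₀) ≠ 0, and let n be a positive integer and λ a real constant. Then T_k(x, y, z) = 0 for all x, y, z ∈ V if and only if λ = -2n. (Hence a Sasaki-like manifold admitting a Ricci-like soliton with vertical potential is locally Ricci symmetric if and only if it is an Einstein manifold.) -/
/-- Suppose `g(φ x₀, φ x₀) ≠ 0` for some `x₀`, `n` a positive integer, `λ` real.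
For `T_k(x,y,z) := -(λ+2n)·(g(x,φy)η(z) + g(x,φz)η(y))` (which equals `(∇_x ρ)(y,z)` on a
Sasaki-like manifold admitting a Ricci-like soliton with vertical potential), one has
`T_k(x,y,z) = 0` for all `x, y, z` iff `λ = -2n`. Hence such a manifold is locally Ricci
symmetric iff it is an Einstein manifold. -/
theorem stmt_18 {V : Type*} [AddCommGroup V] [Module ℝ V]
    (φ : V →ₗ[ℝ] V) (ξ : V) (η : V →ₗ[ℝ] ℝ) (g : LinearMap.BilinForm ℝ V)
    (hg_symm : ∀ x y : V, g x y = g y x)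
    (hφξ : φ ξ = 0)
    (hφφ : ∀ x : V, φ (φ x) = -x + η x • ξ)
    (hηφ : ∀ x : V, η (φ x) = 0)
    (hηξ : η ξ = 1)
    (hgφφ : ∀ x y : V, g (φ x) (φ y) = -g x y + η x * η y)
    (x₀ : V) (hx₀ : g (φ x₀) (φ x₀) ≠ 0)
    (n : ℕ) (hn : 0 < n)
    (lam : ℝ)
    (Tk : V → V → V → ℝ)
    (hTk : ∀ x y z : V, Tk x y z =
      -(lam + 2 * n) * (g x (φ y) * η z + g x (φ z) * η y)) :
    (∀ x y z : V, Tk x y z = 0) ↔ lam = -(2 * n) := by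
  constructor
  · intro h
    have h1 := h (φ x₀) x₀ ξ
    rw [hTk] at h1
    rw [hφξ, hηξ] at h1
    simp only [map_zero, LinearMap.zero_apply, zero_mul, add_zero, mul_one] at h1
    rcases mul_eq_zero.mp h1 with h2 | h2
    · linarith [neg_eq_zero.mp h2]
    · exact absurd h2 hx₀
  · intro h x y z
    rw [hTk, h]
    ring
end

section
/- Let n be a positive integer and λ a real constant. (i) For all x, y, z ∈ V with η(y) = 0 and η(z) = 0 one has T_k(x, y, z) = 0; i.e. the manifold is locally Ricci φ-symmetric. (ii) If there exists x₀ ∈ V with g(φ x₀, φ x₀) ≠ 0, then T_k(x, y, z) = 0 for all x, y ∈ V and all z ∈ V with η(z) = 0 if and only if λ = -2n; i.e. the manifold is globally Ricci φ-symmetric if and only if it is Einstein. -/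
/-- For `T_k(x,y,z) := -(λ+2n)·(g(x,φy)η(z) + g(x,φz)η(y))`:
(i) `T_k(x,y,z) = 0` whenever `η(y) = 0` and `η(z) = 0`, i.e. the manifold is locally Ricci
φ-symmetric; (ii) if `g(φ x₀, φ x₀) ≠ 0` for some `x₀`, then `T_k(x,y,z) = 0` for all `x, y`
and all `z` with `η(z) = 0` iff `λ = -2n`, i.e. the manifold is globally Ricci φ-symmetric
iff it is Einstein. -/
theorem stmt_19 {V : Type*} [AddCommGroup V] [Module ℝ V]
    (φ : V →ₗ[ℝ] V) (ξ : V) (η : V →ₗ[ℝ] ℝ) (g : LinearMap.BilinForm ℝ V)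
    (hg_symm : ∀ x y : V, g x y = g y x)
    (hφξ : φ ξ = 0)
    (hφφ : ∀ x : V, φ (φ x) = -x + η x • ξ)
    (hηφ : ∀ x : V, η (φ x) = 0)
    (hηξ : η ξ = 1)
    (hgφφ : ∀ x y : V, g (φ x) (φ y) = -g x y + η x * η y)
    (n : ℕ) (hn : 0 < n)
    (lam : ℝ)
    (Tk : V → V → V → ℝ)
    (hTk : ∀ x y z : V, Tk x y z =
      -(lam + 2 * n) * (g x (φ y) * η z + g x (φ z) * η y)) :
    (∀ x y z : V, η y = 0 → η z = 0 → Tk x y z = 0) ∧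
    (∀ x₀ : V, g (φ x₀) (φ x₀) ≠ 0 →
      ((∀ x y z : V, η z = 0 → Tk x y z = 0) ↔ lam = -(2 * n))) := by
  constructor
  · intro x y z hy hz
    rw [hTk, hy, hz]; ring
  · intro x₀ hx₀
    constructor
    · intro h
      have hz : η (x₀ - η x₀ • ξ) = 0 := by simp [hηξ]
      have hφz : φ (x₀ - η x₀ • ξ) = φ x₀ := by simp [hφξ]
      have := h (φ x₀) ξ (x₀ - η x₀ • ξ) hz
      rw [hTk, hφz, hφξ, hηξ] at this
      simp only [map_zero, LinearMap.zero_apply] at this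
      have h2 : -(lam + 2 * n) * g (φ x₀) (φ x₀) = 0 := by linarith [this]
      rcases mul_eq_zero.mp h2 with h3 | h3
      · linarith [h3]
      · exact absurd h3 hx₀
    · intro h x y z hz
      rw [hTk, h, hz]; ring
end
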